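/- Every nonzero (finite-dimensional) null symplectic triple system T over a field of characteristic ≠ 2, 3 contains a nonzero element x with d_{x,x} = 0. -/
import Mathlib


/-- A null symplectic triple system: a trilinear product which is symmetric in its
arguments and such that the maps `d_{x,y} = [xy·]` are derivations of the product. -/
def IsNullSTS (k : Type*) {T : Type*} [Field k] [AddCommGroup T] [Module k T]
    (tp : T →ₗ[k] T →ₗ[k] T →ₗ[k] T) : Prop :=
  (∀ x y z : T, tp x y z = tp y x z) ∧
  (∀ x y z : T, tp x y z = tp x z y) ∧
  (∀ x y u v w : T, tp x y (tp u v w) =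
      tp (tp x y u) v w + tp u (tp x y v) w + tp u v (tp x y w))

/-- Every nonzero finite-dimensional null symplectic triple system over
a field of characteristic `≠ 2, 3` contains a nonzero element `x` with `d_{x,x} = 0`. -/
theorem nullSTS_exists_dxx_zero (k T : Type*) [Field k] [AddCommGroup T] [Module k T]
    [FiniteDimensional k T] [Nontrivial T]
    (hchar2 : ringChar k ≠ 2) (hchar3 : ringChar k ≠ 3)
    (tp : T →ₗ[k] T →ₗ[k] T →ₗ[k] T) (hnsts : IsNullSTS k tp) :
    ∃ x : T, x ≠ 0 ∧ tp x x = 0 := by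
  obtain ⟨h1, h2, hder⟩ := hnsts
  have h2k : (2:k) ≠ 0 := Ring.two_ne_zero hchar2
  have h3k : (3:k) ≠ 0 := by
    intro h0
    have hd := ringChar.dvd h0
    have hne1 : ringChar k ≠ 1 := CharP.ringChar_ne_one
    rcases (Nat.prime_three).eq_one_or_self_of_dvd _ hd with h' | h' <;>
      [exact hne1 h'; exact hchar3 h']
  by_cases hcube : ∀ x : T, tp x x x = 0
  · obtain ⟨x, hx⟩ := exists_ne (0 : T)
    refine ⟨x, hx, ?_⟩
    ext b
    rw [LinearMap.zero_apply]
    have e1 := hcube (x + b)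
    have e2 := hcube (x - b)
    simp only [map_add, map_sub, LinearMap.add_apply, LinearMap.sub_apply] at e1 e2
    rw [hcube x, hcube b] at e1 e2
    have sxbx : tp x b x = tp x x b := by rw [h2]
    have sbxx : tp b x x = tp x x b := by rw [h1, h2]
    have sbxb : tp b x b = tp x b b := by rw [h1]
    have sbbx : tp b b x = tp x b b := by rw [h2, h1]
    rw [sxbx, sbxx, sbxb, sbbx] at e1 e2
    have e1' : (3:k) • tp x x b + (3:k) • tp x b b = 0 := by rw [← e1]; module
    have e2' : -((3:k) • tp x x b) + (3:k) • tp x b b = 0 := by rw [← e2]; module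
    have e6 : ((2:k) * 3) • tp x x b = 0 := by
      have h := congrArg₂ (fun u v : T => u - v) e1' e2'
      simp only [sub_zero] at h
      rw [← h]; module
    rcases smul_eq_zero.mp e6 with h | h
    · exact absurd h (mul_ne_zero h2k h3k)
    · exact h
  · push_neg at hcube
    obtain ⟨x, hx⟩ := hcube
    set c := tp x x x with hc
    have hcx : ∀ w : T, tp c x w = 0 := by
      intro w
      have e := hder x x x x w
      rw [← hc] at e
      have h0 : tp c x w + tp x c w = 0 := by
        have h := congrArg (fun t => t - tp x x (tp x x w)) e
        simp only [add_sub_cancel_right, sub_self] at h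
        exact h.symm
      rw [h1 x c w] at h0
      have h2' : (2:k) • tp c x w = 0 := by rw [two_smul]; exact h0
      exact (smul_eq_zero.mp h2').resolve_left h2k
    have hxc : ∀ w : T, tp x c w = 0 := fun w => by rw [h1]; exact hcx w
    have hxxc : tp x x c = 0 := by
      rw [h2 x x c, h1 x c x]; exact hcx x
    refine ⟨c, hx, ?_⟩
    ext w
    rw [LinearMap.zero_apply]
    have e := hder x x x c w
    rw [← hc, hxxc, hxc w, hxc (tp x x w)] at e
    simp only [map_zero, LinearMap.zero_apply, add_zero] at e
    exact e.symm
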